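/- arXiv:2506.12178 — 6 statements merged into one kernel-verified Lean document; each statement's English description precedes it below -/
import Mathlib

section
/- Let m, n ≥ 1 be integers, M ≥ 2 a real number, μ ≥ 1/2 and σ ≥ Mμ. Let λ : ℕ → ℝ be a sequence for which there exists C₀ > 0 with |λ_j| ≤ C₀ · j^{M/(2n)} for all j ≥ 1, and let ω = (ω₁, …, ω_m) ∈ ℝ^m with ω ≠ 0. Then the following are equivalent: (i) for every ε > 0 there exists C_ε > 0 such that max_{1 ≤ r ≤ m} |τ_r − ω_r λ_j| ≥ C_ε · exp(−ε(‖τ‖^{1/σ} + j^{1/(2nμ)})) for all τ = (τ₁, …, τ_m) ∈ ℤ^m and all j ≥ 1; (ii) for every δ > 0 there exists C_δ > 0 such that max_{1 ≤ r ≤ m} |1 − exp(−2πi·ω_r·λ_j)| ≥ C_δ · exp(−δ · j^{1/(2nμ)}) for all j ≥ 1. -/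
/-!
The quantity `‖1 - exp(-2πix)‖ = 2|sin πx|` is comparable to the distance from `x` to `ℤ`: it is
at most `2π|k - x|` for every integer `k` and at least `4|round x - x|`. Hence (ii) gives (i) at
once, the extra factor `exp(-ε‖τ‖^(1/σ))` being at most `1`. Conversely, apply (i) to the nearest
integer vector `τ = round (ωλ_j)`: its norm is `O(j^(M/2n))`, and since `M/(2nσ) ≤ 1/(2nμ)` the term
`‖τ‖^(1/σ)` is `O(j^(1/2nμ))`, so it is absorbed by shrinking `ε`.
-/

open Real

/-- The max norm of an integer vector, as a real number. -/
noncomputable def maxZ {m : ℕ} (τ : Fin m → ℤ) : ℝ := ⨆ r, |(τ r : ℝ)|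

lemma norm_one_sub_exp_neg_two_pi_I_mul (x : ℝ) :
    ‖1 - Complex.exp (-(2 * π * Complex.I) * x)‖ = 2 * |sin (π * x)| := by
  have h : -(2 * π * Complex.I) * x = Complex.I * ((-(2 * π * x) : ℝ) : ℂ) := by
    push_cast; ring
  rw [norm_sub_rev, h, Complex.norm_exp_I_mul_ofReal_sub_one, norm_mul, Real.norm_two,
    Real.norm_eq_abs, show -(2 * π * x) / 2 = -(π * x) by ring, sin_neg, abs_neg]

lemma abs_sin_pi_mul_sub_intCast (x : ℝ) (k : ℤ) : |sin (π * (x - k))| = |sin (π * x)| := by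
  rw [show π * (x - k) = π * x - k * π by ring, sin_sub_int_mul_pi, abs_mul, abs_neg_one_zpow,
    one_mul]

lemma norm_one_sub_exp_neg_two_pi_I_mul_le (x : ℝ) (k : ℤ) :
    ‖1 - Complex.exp (-(2 * π * Complex.I) * x)‖ ≤ 2 * π * |k - x| := by
  rw [norm_one_sub_exp_neg_two_pi_I_mul, ← abs_sin_pi_mul_sub_intCast x k, abs_sub_comm,
    mul_assoc]
  gcongr
  calc |sin (π * (x - k))| ≤ |π * (x - k)| := abs_sin_le_abs
    _ = π * |x - k| := by rw [abs_mul, abs_of_pos pi_pos]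

lemma four_mul_abs_round_sub_le_norm_one_sub_exp (x : ℝ) :
    4 * |round x - x| ≤ ‖1 - Complex.exp (-(2 * π * Complex.I) * x)‖ := by
  rw [norm_one_sub_exp_neg_two_pi_I_mul, ← abs_sin_pi_mul_sub_intCast x (round x), abs_sub_comm]
  have hx : |π * (x - round x)| ≤ π / 2 := by
    rw [abs_mul, abs_of_pos pi_pos]
    nlinarith [abs_sub_round x, pi_pos]
  have hsin := mul_abs_le_abs_sin hx
  rw [abs_mul, abs_of_pos pi_pos, ← mul_assoc, div_mul_cancel₀ _ pi_ne_zero] at hsin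
  linarith

section Finite

variable {ι : Type*} [Finite ι]

lemma iSup_norm_one_sub_exp_le (τ : ι → ℤ) (y : ι → ℝ) :
    ⨆ r, ‖1 - Complex.exp (-(2 * π * Complex.I) * y r)‖ ≤ 2 * π * ⨆ r, |(τ r : ℝ) - y r| := by
  refine Real.iSup_le (fun r => (norm_one_sub_exp_neg_two_pi_I_mul_le (y r) (τ r)).trans ?_)
    (mul_nonneg (by positivity) (Real.iSup_nonneg fun _ => abs_nonneg _))
  gcongr
  exact le_ciSup (Finite.bddAbove_range fun r => |(τ r : ℝ) - y r|) r

lemma four_mul_iSup_abs_round_sub_le (y : ι → ℝ) :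
    4 * ⨆ r, |(round (y r) : ℝ) - y r| ≤
      ⨆ r, ‖1 - Complex.exp (-(2 * π * Complex.I) * y r)‖ := by
  rw [Real.mul_iSup_of_nonneg (by norm_num)]
  exact Real.iSup_le (fun r => le_ciSup_of_le (Finite.bddAbove_range _) r
    (four_mul_abs_round_sub_le_norm_one_sub_exp (y r))) (Real.iSup_nonneg fun _ => norm_nonneg _)

end Finite

section MaxNorm

variable {m : ℕ}

lemma maxZ_nonneg (τ : Fin m → ℤ) : 0 ≤ maxZ τ := Real.iSup_nonneg fun _ => abs_nonneg _

lemma maxZ_round_le (y : Fin m → ℝ) : maxZ (fun r => round (y r)) ≤ (⨆ r, |y r|) + 1 / 2 := by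
  refine Real.iSup_le (fun r => ?_) (by positivity [Real.iSup_nonneg fun r => abs_nonneg (y r)])
  have hround : |(round (y r) : ℝ) - y r| ≤ 1 / 2 := abs_sub_comm (y r) _ ▸ abs_sub_round (y r)
  have hy : |y r| ≤ ⨆ r, |y r| := le_ciSup (Finite.bddAbove_range fun r => |y r|) r
  linarith [abs_sub_abs_le_abs_sub (round (y r) : ℝ) (y r)]

lemma exists_maxZ_round_mul_rpow_le {p q s C₀ : ℝ} (ω : Fin m → ℝ) (lam : ℕ → ℝ)
    (hp : 0 ≤ p) (hs : 0 ≤ s) (hpsq : p * s ≤ q) (hC₀ : 0 ≤ C₀)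
    (hlam : ∀ j : ℕ, 1 ≤ j → |lam j| ≤ C₀ * (j : ℝ) ^ p) :
    ∃ K, 0 ≤ K ∧ ∀ j : ℕ, 1 ≤ j →
      maxZ (fun r => round (ω r * lam j)) ^ s ≤ K * (j : ℝ) ^ q := by
  set W := ⨆ r, |ω r|
  have hW : 0 ≤ W := Real.iSup_nonneg fun _ => abs_nonneg _
  refine ⟨(W * C₀ + 1 / 2) ^ s, by positivity, fun j hj => ?_⟩
  have hjR : (1 : ℝ) ≤ j := by exact_mod_cast hj
  have hjp : 1 ≤ (j : ℝ) ^ p := one_le_rpow hjR hp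
  have hsup : ⨆ r, |ω r * lam j| = W * |lam j| := by
    simp_rw [abs_mul]
    exact (Real.iSup_mul_of_nonneg (abs_nonneg _) _).symm
  have hbound : maxZ (fun r => round (ω r * lam j)) ≤ (W * C₀ + 1 / 2) * (j : ℝ) ^ p :=
    calc maxZ (fun r => round (ω r * lam j)) ≤ W * |lam j| + 1 / 2 :=
          hsup ▸ maxZ_round_le fun r => ω r * lam j
      _ ≤ W * (C₀ * (j : ℝ) ^ p) + 1 / 2 * (j : ℝ) ^ p := by
          gcongr
          · exact hlam j hj
          · linarith
      _ = (W * C₀ + 1 / 2) * (j : ℝ) ^ p := by ring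
  calc maxZ (fun r => round (ω r * lam j)) ^ s ≤ ((W * C₀ + 1 / 2) * (j : ℝ) ^ p) ^ s :=
        rpow_le_rpow (maxZ_nonneg _) hbound hs
    _ = (W * C₀ + 1 / 2) ^ s * (j : ℝ) ^ (p * s) := by
        rw [mul_rpow (by positivity) (by positivity), rpow_mul (by positivity)]
    _ ≤ (W * C₀ + 1 / 2) ^ s * (j : ℝ) ^ q := by gcongr

variable {q s : ℝ} (y : ℕ → Fin m → ℝ)

theorem exp_bound_of_diophantine {K : ℝ} (hK : 0 ≤ K)
    (hgrowth : ∀ j : ℕ, 1 ≤ j → maxZ (fun r => round (y j r)) ^ s ≤ K * (j : ℝ) ^ q)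
    (h : ∀ ε : ℝ, 0 < ε → ∃ Cε : ℝ, 0 < Cε ∧ ∀ (τ : Fin m → ℤ) (j : ℕ), 1 ≤ j →
        Cε * Real.exp (-ε * (maxZ τ ^ s + (j : ℝ) ^ q)) ≤ ⨆ r, |(τ r : ℝ) - y j r|) :
    ∀ δ : ℝ, 0 < δ → ∃ Cδ : ℝ, 0 < Cδ ∧ ∀ j : ℕ, 1 ≤ j →
        Cδ * Real.exp (-δ * (j : ℝ) ^ q) ≤
          ⨆ r, ‖1 - Complex.exp (-(2 * π * Complex.I) * y j r)‖ := by
  intro δ hδ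
  obtain ⟨C, hC, hdio⟩ := h (δ / (K + 1)) (by positivity)
  refine ⟨4 * C, by positivity, fun j hj => ?_⟩
  have hdecay : Real.exp (-δ * (j : ℝ) ^ q) ≤
      Real.exp (-(δ / (K + 1)) * (maxZ (fun r => round (y j r)) ^ s + (j : ℝ) ^ q)) := by
    rw [exp_le_exp, neg_mul, neg_mul, neg_le_neg_iff]
    calc δ / (K + 1) * (maxZ (fun r => round (y j r)) ^ s + (j : ℝ) ^ q)
        ≤ δ / (K + 1) * ((K + 1) * (j : ℝ) ^ q) := by gcongr; linarith [hgrowth j hj]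
      _ = δ * (j : ℝ) ^ q := by field_simp
  calc 4 * C * Real.exp (-δ * (j : ℝ) ^ q)
      ≤ 4 * (C * Real.exp (-(δ / (K + 1)) *
          (maxZ (fun r => round (y j r)) ^ s + (j : ℝ) ^ q))) := by
        rw [mul_assoc]; gcongr
    _ ≤ 4 * ⨆ r, |(round (y j r) : ℝ) - y j r| := by gcongr; exact hdio _ j hj
    _ ≤ _ := four_mul_iSup_abs_round_sub_le (y j)

theorem diophantine_of_exp_bound
    (h : ∀ δ : ℝ, 0 < δ → ∃ Cδ : ℝ, 0 < Cδ ∧ ∀ j : ℕ, 1 ≤ j →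
        Cδ * Real.exp (-δ * (j : ℝ) ^ q) ≤
          ⨆ r, ‖1 - Complex.exp (-(2 * π * Complex.I) * y j r)‖) :
    ∀ ε : ℝ, 0 < ε → ∃ Cε : ℝ, 0 < Cε ∧ ∀ (τ : Fin m → ℤ) (j : ℕ), 1 ≤ j →
        Cε * Real.exp (-ε * (maxZ τ ^ s + (j : ℝ) ^ q)) ≤ ⨆ r, |(τ r : ℝ) - y j r| := by
  intro ε hε
  obtain ⟨C, hC, hexp⟩ := h ε hε
  refine ⟨C / (2 * π), by positivity, fun τ j hj => ?_⟩
  have hdecay : Real.exp (-ε * (maxZ τ ^ s + (j : ℝ) ^ q)) ≤ Real.exp (-ε * (j : ℝ) ^ q) := by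
    rw [exp_le_exp]
    nlinarith [rpow_nonneg (maxZ_nonneg τ) s]
  rw [div_mul_eq_mul_div, div_le_iff₀ (by positivity), mul_comm _ (2 * π)]
  calc C * Real.exp (-ε * (maxZ τ ^ s + (j : ℝ) ^ q)) ≤ C * Real.exp (-ε * (j : ℝ) ^ q) := by
        gcongr
    _ ≤ ⨆ r, ‖1 - Complex.exp (-(2 * π * Complex.I) * y j r)‖ := hexp j hj
    _ ≤ 2 * π * ⨆ r, |(τ r : ℝ) - y j r| := iSup_norm_one_sub_exp_le τ (y j)

end MaxNorm

theorem stmt0_general (m n : ℕ) (M μ σ : ℝ)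
    (hM : 2 ≤ M) (hμ : 1 / 2 ≤ μ) (hσ : M * μ ≤ σ)
    (lam : ℕ → ℝ) (C₀ : ℝ) (hC₀ : 0 < C₀)
    (hlam : ∀ j : ℕ, 1 ≤ j → |lam j| ≤ C₀ * (j : ℝ) ^ (M / (2 * n)))
    (ω : Fin m → ℝ) :
    (∀ ε : ℝ, 0 < ε → ∃ Cε : ℝ, 0 < Cε ∧ ∀ (τ : Fin m → ℤ) (j : ℕ), 1 ≤ j →
        Cε * Real.exp (-ε * ((maxZ τ) ^ (1 / σ) + (j : ℝ) ^ (1 / (2 * n * μ)))) ≤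
          ⨆ r, |(τ r : ℝ) - ω r * lam j|)
    ↔
    (∀ δ : ℝ, 0 < δ → ∃ Cδ : ℝ, 0 < Cδ ∧ ∀ j : ℕ, 1 ≤ j →
        Cδ * Real.exp (-δ * (j : ℝ) ^ (1 / (2 * n * μ))) ≤
          ⨆ r, ‖1 - Complex.exp (-(2 * Real.pi * Complex.I) * ω r * lam j)‖) := by
  have hμ0 : 0 < μ := by linarith
  have hσ0 : 0 < σ := by nlinarith
  have hexponents : M / (2 * n) * (1 / σ) ≤ 1 / (2 * n * μ) :=
    calc M / (2 * n) * (1 / σ) = 1 / (2 * n) * (M / σ) := by ring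
      _ ≤ 1 / (2 * n) * (1 / μ) := by
          refine mul_le_mul_of_nonneg_left ?_ (by positivity)
          rw [div_le_div_iff₀ hσ0 hμ0]
          linarith
      _ = 1 / (2 * n * μ) := by ring
  obtain ⟨K, hK, hgrowth⟩ := exists_maxZ_round_mul_rpow_le ω lam
    (div_nonneg (by linarith) (by positivity)) (by positivity) hexponents hC₀.le hlam
  have hcast : ∀ j r, -(2 * π * Complex.I) * ω r * lam j =
      -(2 * π * Complex.I) * ((ω r * lam j : ℝ) : ℂ) := by
    intros; push_cast; ring
  simp only [hcast]
  exact ⟨exp_bound_of_diophantine (fun j r => ω r * lam j) hK hgrowth,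
    diophantine_of_exp_bound (fun j r => ω r * lam j)⟩

/-- Equivalence of the Diophantine condition on `max_r |τ_r - ω_r λ_j|` and the
lower bound on `max_r |1 - exp(-2πi ω_r λ_j)|` (Lemma 3.4 of the paper). -/
theorem stmt0 (m n : ℕ) (hm : 1 ≤ m) (hn : 1 ≤ n) (M μ σ : ℝ)
    (hM : 2 ≤ M) (hμ : 1 / 2 ≤ μ) (hσ : M * μ ≤ σ)
    (lam : ℕ → ℝ) (C₀ : ℝ) (hC₀ : 0 < C₀)
    (hlam : ∀ j : ℕ, 1 ≤ j → |lam j| ≤ C₀ * (j : ℝ) ^ (M / (2 * n)))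
    (ω : Fin m → ℝ) (hω : ω ≠ 0) :
    (∀ ε : ℝ, 0 < ε → ∃ Cε : ℝ, 0 < Cε ∧ ∀ (τ : Fin m → ℤ) (j : ℕ), 1 ≤ j →
        Cε * Real.exp (-ε * ((maxZ τ) ^ (1 / σ) + (j : ℝ) ^ (1 / (2 * n * μ)))) ≤
          ⨆ r, |(τ r : ℝ) - ω r * lam j|)
    ↔
    (∀ δ : ℝ, 0 < δ → ∃ Cδ : ℝ, 0 < Cδ ∧ ∀ j : ℕ, 1 ≤ j →
        Cδ * Real.exp (-δ * (j : ℝ) ^ (1 / (2 * n * μ))) ≤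
          ⨆ r, ‖1 - Complex.exp (-(2 * Real.pi * Complex.I) * ω r * lam j)‖) :=
  stmt0_general m n M μ σ hM hμ hσ lam C₀ hC₀ hlam ω
end

section
/- Let n ≥ 1 and N ≥ 1 be integers, μ ≥ 1/2, and α ∈ ℝ^N. Let λ : ℕ → ℝ be a sequence such that λ_j ≥ 1 for all j ≥ 1 and there exists c > 0 with λ_j ≤ c · j^{1/n} for all j ≥ 1. Assume that for every σ ≥ 2μ and every ε > 0 there exists C_ε > 0 such that ‖τ − λ_j α‖ ≥ C_ε · exp(−ε · λ_j^{1/σ}) for all (τ, j) ∈ ℤ^N × ℕ with τ − λ_j α ≠ 0. Then for every σ ≥ 2μ, the vector α satisfies condition 𝒟_{σ,μ} with respect to {λ_j}: for every ε > 0 there exists C'_ε > 0 such that ‖τ − α λ_j‖ ≥ C'_ε · exp(−ε(‖τ‖^{1/σ} + j^{1/(2nμ)})) for all (τ, j) ∈ ℤ^N × ℕ with τ − α λ_j ≠ 0. -/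
/-- If α is not exponentially Liouville of any order σ ≥ 2μ with respect to the
sequence {λ_j} (with λ_j ≥ 1 and λ_j ≤ c j^{1/n}), then α satisfies condition
𝒟_{σ,μ} with respect to {λ_j} for every σ ≥ 2μ. -/
theorem stmt2 (n N : ℕ) (hn : 1 ≤ n) (hN : 1 ≤ N) (μ : ℝ) (hμ : 1 / 2 ≤ μ)
    (α : Fin N → ℝ) (lam : ℕ → ℝ)
    (hlam1 : ∀ j : ℕ, 1 ≤ j → 1 ≤ lam j)
    (c : ℝ) (hc : 0 < c) (hlam2 : ∀ j : ℕ, 1 ≤ j → lam j ≤ c * (j : ℝ) ^ (1 / (n : ℝ)))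
    (H : ∀ σ : ℝ, 2 * μ ≤ σ → ∀ ε : ℝ, 0 < ε → ∃ Cε : ℝ, 0 < Cε ∧
      ∀ (τ : Fin N → ℤ) (j : ℕ), 1 ≤ j →
        (fun r => (τ r : ℝ) - lam j * α r) ≠ 0 →
        Cε * Real.exp (-ε * lam j ^ (1 / σ)) ≤ ⨆ r, |(τ r : ℝ) - lam j * α r|) :
    ∀ σ : ℝ, 2 * μ ≤ σ → ∀ ε : ℝ, 0 < ε → ∃ Cε' : ℝ, 0 < Cε' ∧
      ∀ (τ : Fin N → ℤ) (j : ℕ), 1 ≤ j →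
        (fun r => (τ r : ℝ) - α r * lam j) ≠ 0 →
        Cε' * Real.exp (-ε * ((⨆ r, |(τ r : ℝ)|) ^ (1 / σ) + (j : ℝ) ^ (1 / (2 * n * μ)))) ≤
          ⨆ r, |(τ r : ℝ) - α r * lam j| := by
  intro σ hσ ε hε
  have hμ0 : (0 : ℝ) < μ := lt_of_lt_of_le (by norm_num) hμ
  have hσ1 : (1 : ℝ) ≤ σ := le_trans (by linarith) hσ
  have hσ0 : (0 : ℝ) < σ := lt_of_lt_of_le one_pos hσ1
  have hn0 : (0 : ℝ) < (n : ℝ) := by exact_mod_cast hn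
  set K : ℝ := max 1 (c ^ (1 / σ)) with hK
  have hK1 : (1 : ℝ) ≤ K := le_max_left _ _
  have hK0 : (0 : ℝ) < K := lt_of_lt_of_le one_pos hK1
  have hε0 : 0 < ε / K := div_pos hε hK0
  obtain ⟨Cε, hCε, hmain⟩ := H σ hσ (ε / K) hε0
  refine ⟨Cε, hCε, ?_⟩
  intro τ j hj hne
  have hne' : (fun r => (τ r : ℝ) - lam j * α r) ≠ 0 := by
    intro h
    apply hne
    funext r
    have := congrFun h r
    linarith [this, mul_comm (lam j) (α r)]
  have key := hmain τ j hj hne'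
  have hlamj : 1 ≤ lam j := hlam1 j hj
  have hj1 : (1 : ℝ) ≤ (j : ℝ) := by exact_mod_cast hj
  -- bound: (ε/K) * lam j ^ (1/σ) ≤ ε * j ^ (1/(2nμ))
  have h1 : lam j ^ (1 / σ) ≤ c ^ (1 / σ) * (j : ℝ) ^ (1 / ((n : ℝ) * σ)) := by
    have := Real.rpow_le_rpow (by linarith) (hlam2 j hj) (by positivity : (0:ℝ) ≤ 1/σ)
    calc lam j ^ (1 / σ) ≤ (c * (j : ℝ) ^ (1 / (n : ℝ))) ^ (1 / σ) := this
      _ = c ^ (1 / σ) * (j : ℝ) ^ (1 / ((n : ℝ) * σ)) := by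
          rw [Real.mul_rpow hc.le (by positivity),
            ← Real.rpow_mul (by positivity : (0:ℝ) ≤ (j:ℝ)), div_mul_div_comm, one_mul]
  have h2 : (j : ℝ) ^ (1 / ((n : ℝ) * σ)) ≤ (j : ℝ) ^ (1 / (2 * (n : ℝ) * μ)) := by
    apply Real.rpow_le_rpow_of_exponent_le hj1
    apply one_div_le_one_div_of_le (by positivity)
    nlinarith
  have hcK : c ^ (1 / σ) ≤ K := le_max_right _ _
  have hbound : (ε / K) * lam j ^ (1 / σ) ≤ ε * (j : ℝ) ^ (1 / (2 * (n : ℝ) * μ)) := by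
    have hA : (ε / K) * lam j ^ (1 / σ) ≤ (ε / K) * (K * (j : ℝ) ^ (1 / ((n : ℝ) * σ))) := by
      apply mul_le_mul_of_nonneg_left _ hε0.le
      exact le_trans h1 (mul_le_mul_of_nonneg_right hcK (by positivity))
    have hB : (ε / K) * (K * (j : ℝ) ^ (1 / ((n : ℝ) * σ))) = ε * (j : ℝ) ^ (1 / ((n : ℝ) * σ)) := by
      field_simp
    rw [hB] at hA
    exact le_trans hA (mul_le_mul_of_nonneg_left h2 hε.le)
  have hsup0 : 0 ≤ ⨆ r, |(τ r : ℝ)| := Real.iSup_nonneg (fun r => abs_nonneg _)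
  have hsupr : 0 ≤ (⨆ r, |(τ r : ℝ)|) ^ (1 / σ) := Real.rpow_nonneg hsup0 _
  have hexp : Real.exp (-ε * ((⨆ r, |(τ r : ℝ)|) ^ (1 / σ) + (j : ℝ) ^ (1 / (2 * n * μ))))
      ≤ Real.exp (-(ε / K) * lam j ^ (1 / σ)) := by
    apply Real.exp_le_exp.mpr
    have : ε * (j : ℝ) ^ (1 / (2 * (n : ℝ) * μ)) ≤
        ε * ((⨆ r, |(τ r : ℝ)|) ^ (1 / σ) + (j : ℝ) ^ (1 / (2 * n * μ))) := by
      push_cast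
      nlinarith
    push_cast at this ⊢
    nlinarith [hbound]
  calc Cε * Real.exp (-ε * ((⨆ r, |(τ r : ℝ)|) ^ (1 / σ) + (j : ℝ) ^ (1 / (2 * n * μ))))
      ≤ Cε * Real.exp (-(ε / K) * lam j ^ (1 / σ)) :=
        mul_le_mul_of_nonneg_left hexp hCε.le
    _ ≤ ⨆ r, |(τ r : ℝ) - lam j * α r| := key
    _ = ⨆ r, |(τ r : ℝ) - α r * lam j| := by
        congr 1; funext r; rw [mul_comm]
end

section
/- Let m, n ≥ 1 be integers and μ ≥ 1/2. Let ω = (ω₁, …, ω_m) ∈ ℂ^m and λ : ℕ → ℝ, and for τ ∈ ℤ^m, j ≥ 1 and 1 ≤ r ≤ m set σ_r(τ, j) := τ_r + ω_r λ_j and ‖σ(τ, j)‖ := max_{1 ≤ r ≤ m} |σ_r(τ, j)|. Assume that the set N = {(τ, j) ∈ ℤ^m × ℕ : σ_r(τ, j) = 0 for all r} is finite, and that there exists σ₀ > 1 such that for every σ' ≥ σ₀ and every ε > 0 there exists C_ε > 0 with ‖σ(τ, j)‖ ≥ C_ε · exp(−ε(‖τ‖^{1/σ'} + j^{1/(2nμ)}))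 for all (τ, j) with ‖σ(τ, j)‖ ≠ 0. Let σ̃ > 1 and let û, f̂₁, …, f̂_m : ℤ^m × ℕ → ℂ be functions satisfying σ_r(τ, j) · û(τ, j) = f̂_r(τ, j) for all r, τ, j, and suppose there exist ε₀ > 0 and C₀ > 0 such that |f̂_r(τ, j)| ≤ C₀ · exp(−ε₀(‖τ‖^{1/σ̃} + j^{1/(2nμ)})) for all r, τ, j. Then there exist ε₁ > 0 and C₁ > 0 such that |û(τ, j)| ≤ C₁ · exp(−ε₁(‖τ‖^{1/σ̃} + j^{1/(2nμ)})) for all (τ, j) ∈ ℤ^m × ℕ. -/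
/-!
Outside the finite zero set of the symbol, the equations `σ_r û = f̂_r` give
`‖σ‖ · |û| ≤ C₀ e^{-ε₀ A}`, where `A = ‖τ‖^{1/σ̃} + j^{1/(2nμ)}`, while the Diophantine bound,
applied with `σ' = max σ₀ σ̃` and `ε = ε₀ / 2`, gives `‖σ‖ ≥ C e^{-ε₀ A / 2}`: the norm of an integer vector is `0` or at least `1`, so
`‖τ‖^{1/σ'} ≤ ‖τ‖^{1/σ̃}`.
Dividing leaves `|û| ≤ (C₀ / C) e^{-ε₀ A / 2}`, and the finitely many zeros of the symbol only
enlarge the constant.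
-/

open Real

theorem iSup_abs_intCast_eq_zero_or_one_le {ι : Type*} [Finite ι] (τ : ι → ℤ) :
    (⨆ r, |(τ r : ℝ)|) = 0 ∨ 1 ≤ ⨆ r, |(τ r : ℝ)| := by
  by_cases h : ∀ r, τ r = 0
  · left
    simp [h]
  · obtain ⟨r, hr⟩ := not_forall.1 h
    right
    calc (1 : ℝ) ≤ |(τ r : ℝ)| := by exact_mod_cast Int.one_le_abs hr
      _ ≤ ⨆ r, |(τ r : ℝ)| :=
        le_ciSup (f := fun r => |(τ r : ℝ)|) (Set.finite_range _).bddAbove r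

theorem iSup_abs_intCast_rpow_le_rpow {ι : Type*} [Finite ι] (τ : ι → ℤ) {a b : ℝ}
    (ha : 0 < a) (hab : a ≤ b) :
    (⨆ r, |(τ r : ℝ)|) ^ a ≤ (⨆ r, |(τ r : ℝ)|) ^ b := by
  rcases iSup_abs_intCast_eq_zero_or_one_le τ with h | h
  · rw [h, zero_rpow ha.ne', zero_rpow (ha.trans_le hab).ne']
  · exact rpow_le_rpow_of_exponent_le h hab

theorem iSup_norm_mul_le {ι R : Type*} [Nonempty ι] [NonUnitalSeminormedRing R] [NormMulClass R]
    {a : ι → R} {x : R} {B : ℝ} (h : ∀ r, ‖a r * x‖ ≤ B) :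
    (⨆ r, ‖a r‖) * ‖x‖ ≤ B := by
  rw [iSup_mul_of_nonneg (norm_nonneg x)]
  exact ciSup_le fun r => norm_mul (a r) x ▸ h r

theorem le_div_mul_exp_of_mul_exp_le_mul {x s a c C₀ δ ε : ℝ} (hx : 0 ≤ x) (hc : 0 < c)
    (hlow : c * exp (-δ * a) ≤ s) (hdiv : s * x ≤ C₀ * exp (-ε * a)) :
    x ≤ C₀ / c * exp (-(ε - δ) * a) := by
  have hpos : 0 < c * exp (-δ * a) := by positivity
  calc x ≤ C₀ * exp (-ε * a) / (c * exp (-δ * a)) := by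
        rw [le_div_iff₀ hpos]
        nlinarith
    _ = C₀ / c * exp (-(ε - δ) * a) := by
        rw [mul_div_mul_comm, ← exp_sub]
        ring_nf

theorem Set.Finite.exists_norm_le_mul_exp {α E : Type*} [SeminormedAddCommGroup E] {Z : Set α}
    (hZ : Z.Finite) (u : α → E) (A : α → ℝ) (κ : ℝ) :
    ∃ M, ∀ p ∈ Z, ‖u p‖ ≤ M * exp (-κ * A p) := by
  obtain ⟨M, hM⟩ := (hZ.image fun p => ‖u p‖ * exp (κ * A p)).bddAbove
  refine ⟨M, fun p hp => ?_⟩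
  calc ‖u p‖ = ‖u p‖ * exp (κ * A p) * exp (-κ * A p) := by
        rw [mul_assoc, ← exp_add, neg_mul, add_neg_cancel, exp_zero, mul_one]
    _ ≤ M * exp (-κ * A p) := by
        gcongr
        exact hM (Set.mem_image_of_mem _ hp)

theorem exists_norm_le_mul_exp_of_lower_bound {α E : Type*} [SeminormedAddCommGroup E]
    (u : α → E) (A s : α → ℝ) {D Z : Set α} (hZ : Z.Finite) {c C₀ δ ε : ℝ} (hc : 0 < c)
    (hlow : ∀ p ∈ D, p ∉ Z → c * exp (-δ * A p) ≤ s p)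
    (hdiv : ∀ p ∈ D, p ∉ Z → s p * ‖u p‖ ≤ C₀ * exp (-ε * A p)) :
    ∃ C > 0, ∀ p ∈ D, ‖u p‖ ≤ C * exp (-(ε - δ) * A p) := by
  obtain ⟨M, hM⟩ := hZ.exists_norm_le_mul_exp u A (ε - δ)
  refine ⟨max (max (C₀ / c) M) 1, by positivity, fun p hp => ?_⟩
  by_cases hpZ : p ∈ Z
  · calc ‖u p‖ ≤ M * exp (-(ε - δ) * A p) := hM p hpZ
      _ ≤ _ := by gcongr; exact (le_max_right _ _).trans (le_max_left _ _)
  · calc ‖u p‖ ≤ C₀ / c * exp (-(ε - δ) * A p) :=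
          le_div_mul_exp_of_mul_exp_le_mul (norm_nonneg _) hc (hlow p hp hpZ) (hdiv p hp hpZ)
      _ ≤ _ := by gcongr; exact (le_max_left _ _).trans (le_max_left _ _)

theorem stmt3_general (m n : ℕ) (μ : ℝ)
    (ω : Fin m → ℂ) (lam : ℕ → ℝ)
    (hfin : {p : (Fin m → ℤ) × ℕ | 1 ≤ p.2 ∧ ∀ r, (p.1 r : ℂ) + ω r * lam p.2 = 0}.Finite)
    (hdio : ∃ σ₀ : ℝ, 1 < σ₀ ∧ ∀ σ' : ℝ, σ₀ ≤ σ' → ∀ ε : ℝ, 0 < ε → ∃ Cε : ℝ, 0 < Cε ∧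
      ∀ (τ : Fin m → ℤ) (j : ℕ), 1 ≤ j →
        (⨆ r, ‖(τ r : ℂ) + ω r * lam j‖) ≠ 0 →
        Cε * Real.exp (-ε * ((⨆ r, |(τ r : ℝ)|) ^ (1 / σ') + (j : ℝ) ^ (1 / (2 * n * μ)))) ≤
          ⨆ r, ‖(τ r : ℂ) + ω r * lam j‖)
    (σt : ℝ) (hσt : 1 < σt)
    (u : (Fin m → ℤ) → ℕ → ℂ) (f : Fin m → (Fin m → ℤ) → ℕ → ℂ)
    (heq : ∀ (r : Fin m) (τ : Fin m → ℤ) (j : ℕ), 1 ≤ j →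
      ((τ r : ℂ) + ω r * lam j) * u τ j = f r τ j)
    (ε₀ C₀ : ℝ) (hε₀ : 0 < ε₀)
    (hf : ∀ (r : Fin m) (τ : Fin m → ℤ) (j : ℕ), 1 ≤ j →
      ‖f r τ j‖ ≤
        C₀ * Real.exp (-ε₀ * ((⨆ r', |(τ r' : ℝ)|) ^ (1 / σt) + (j : ℝ) ^ (1 / (2 * n * μ))))) :
    ∃ ε₁ C₁ : ℝ, 0 < ε₁ ∧ 0 < C₁ ∧ ∀ (τ : Fin m → ℤ) (j : ℕ), 1 ≤ j →
      ‖u τ j‖ ≤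
        C₁ * Real.exp (-ε₁ * ((⨆ r, |(τ r : ℝ)|) ^ (1 / σt) + (j : ℝ) ^ (1 / (2 * n * μ)))) := by
  obtain ⟨σ₀, hσ₀, hdio⟩ := hdio
  obtain ⟨c, hc, hlow⟩ := hdio (max σ₀ σt) (le_max_left _ _) (ε₀ / 2) (by positivity)
  have hdecay := exists_norm_le_mul_exp_of_lower_bound (fun p => u p.1 p.2)
    (fun p => (⨆ r, |(p.1 r : ℝ)|) ^ (1 / σt) + (p.2 : ℝ) ^ (1 / (2 * n * μ)))
    (fun p => ⨆ r, ‖(p.1 r : ℂ) + ω r * lam p.2‖) (D := {p | 1 ≤ p.2}) hfin hc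
    (C₀ := C₀) (δ := ε₀ / 2) (ε := ε₀) ?_ ?_
  · obtain ⟨C₁, hC₁, hu⟩ := hdecay
    exact ⟨ε₀ - ε₀ / 2, C₁, by linarith, hC₁, fun τ j hj => hu (τ, j) hj⟩
  all_goals
    rintro ⟨τ, j⟩ (hj : 1 ≤ j) hzero
    obtain ⟨r, hr⟩ : ∃ r, (τ r : ℂ) + ω r * lam j ≠ 0 := by simpa [hj] using hzero
  · have hsymbol : 0 < ⨆ r, ‖(τ r : ℂ) + ω r * lam j‖ :=
      (norm_pos_iff.2 hr).trans_le <|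
        le_ciSup (f := fun r => ‖(τ r : ℂ) + ω r * lam j‖) (Set.finite_range _).bddAbove r
    refine le_trans ?_ (hlow τ j hj hsymbol.ne')
    rw [neg_mul, neg_mul]
    gcongr c * exp (-(ε₀ / 2 * (?_ + _)))
    exact iSup_abs_intCast_rpow_le_rpow τ (by positivity)
      (one_div_le_one_div_of_le (by positivity) (le_max_right _ _))
  · have : Nonempty (Fin m) := ⟨r⟩
    exact iSup_norm_mul_le fun r => heq r τ j hj ▸ hf r τ j hj

/-- Sufficiency part of the hypoellipticity criterion for time-independent systems,
in Fourier-coefficient form: finiteness of the zero set of the symbol together with the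
Diophantine lower bound imply Gelfand–Shilov decay of the solution coefficients. -/
theorem stmt3 (m n : ℕ) (hm : 1 ≤ m) (hn : 1 ≤ n) (μ : ℝ) (hμ : 1 / 2 ≤ μ)
    (ω : Fin m → ℂ) (lam : ℕ → ℝ)
    (hfin : {p : (Fin m → ℤ) × ℕ | 1 ≤ p.2 ∧ ∀ r, (p.1 r : ℂ) + ω r * lam p.2 = 0}.Finite)
    (hdio : ∃ σ₀ : ℝ, 1 < σ₀ ∧ ∀ σ' : ℝ, σ₀ ≤ σ' → ∀ ε : ℝ, 0 < ε → ∃ Cε : ℝ, 0 < Cε ∧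
      ∀ (τ : Fin m → ℤ) (j : ℕ), 1 ≤ j →
        (⨆ r, ‖(τ r : ℂ) + ω r * lam j‖) ≠ 0 →
        Cε * Real.exp (-ε * ((⨆ r, |(τ r : ℝ)|) ^ (1 / σ') + (j : ℝ) ^ (1 / (2 * n * μ)))) ≤
          ⨆ r, ‖(τ r : ℂ) + ω r * lam j‖)
    (σt : ℝ) (hσt : 1 < σt)
    (u : (Fin m → ℤ) → ℕ → ℂ) (f : Fin m → (Fin m → ℤ) → ℕ → ℂ)
    (heq : ∀ (r : Fin m) (τ : Fin m → ℤ) (j : ℕ), 1 ≤ j →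
      ((τ r : ℂ) + ω r * lam j) * u τ j = f r τ j)
    (ε₀ C₀ : ℝ) (hε₀ : 0 < ε₀) (hC₀ : 0 < C₀)
    (hf : ∀ (r : Fin m) (τ : Fin m → ℤ) (j : ℕ), 1 ≤ j →
      ‖f r τ j‖ ≤
        C₀ * Real.exp (-ε₀ * ((⨆ r', |(τ r' : ℝ)|) ^ (1 / σt) + (j : ℝ) ^ (1 / (2 * n * μ))))) :
    ∃ ε₁ C₁ : ℝ, 0 < ε₁ ∧ 0 < C₁ ∧ ∀ (τ : Fin m → ℤ) (j : ℕ), 1 ≤ j →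
      ‖u τ j‖ ≤
        C₁ * Real.exp (-ε₁ * ((⨆ r, |(τ r : ℝ)|) ^ (1 / σt) + (j : ℝ) ^ (1 / (2 * n * μ)))) :=
  stmt3_general m n μ ω lam hfin hdio σt hσt u f heq ε₀ C₀ hε₀ hf
end

section
/- Let m, n ≥ 1 be integers and μ ≥ 1/2. Let ω = (ω₁, …, ω_m) ∈ ℂ^m and λ : ℕ → ℝ, and for τ ∈ ℤ^m, j ≥ 1 and 1 ≤ r ≤ m set σ_r(τ, j) := τ_r + ω_r λ_j and ‖σ(τ, j)‖ := max_{1 ≤ r ≤ m} |σ_r(τ, j)|. Suppose there exist σ > 1 and ε > 0 such that for every δ > 0 there exists (τ, j) ∈ ℤ^m × ℕ with 0 < ‖σ(τ, j)‖ < δ · exp(−ε(‖τ‖^{1/σ} + j^{1/(2nμ)})). Then there exist functions û, f̂₁, …, f̂_m : ℤ^m × ℕ → ℂ such that: (1) σ_r(τ, j) · û(τ, j) = f̂_r(τ, j) for all r, τ, j; (2) |f̂_r(τ, j)| ≤ exp(−ε(‖τ‖^{1/σ} + j^{1/(2nμ)})) for all r, τ, j; (3) û takes only the values 0 and 1, and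 the set {(τ, j) : û(τ, j) = 1} is infinite; (4) for every σ' > 1, every ε' > 0 and every C > 0, the estimate |û(τ, j)| ≤ C · exp(−ε'(‖τ‖^{1/σ'} + j^{1/(2nμ)})) fails for some (τ, j). -/
/-!
Let `N(τ, j) = max_r |τ_r + ω_r λ_j|` and `E(τ, j) = exp (-ε (‖τ‖^{1/σ} + j^{1/(2nμ)}))`. The
hypothesis says that `N / E` takes positive values arbitrarily close to `0`, so the set `S` of
points with `j ≥ 1` and `0 < N < E` is infinite: a finite `S` would give a positive lower bound
for `N / E` on it. Take for `û` the indicator of `S` and `f̂_r = σ_r û`; then `|f̂_r| ≤ N ≤ E`.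
Any Gelfand–Shilov weight tends to infinity along the cofinite filter of `ℤ^m × ℕ`, so the
estimate `1 ≤ C exp (-ε' weight)` fails at some point of the infinite set `S`.
-/

open Filter Topology

theorem Set.infinite_of_forall_exists_pos_lt {α : Type*} {s : Set α} {h : α → ℝ}
    (H : ∀ δ > 0, ∃ p ∈ s, 0 < h p ∧ h p < δ) : s.Infinite := by
  intro hs
  obtain ⟨p₀, hp₀, hp₀pos, -⟩ := H 1 one_pos
  obtain ⟨a, ⟨-, ha⟩, hmin⟩ := (s ∩ {p | 0 < h p}).exists_min_image h
    (hs.subset Set.inter_subset_left) ⟨p₀, hp₀, hp₀pos⟩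
  obtain ⟨p, hp, hpos, hlt⟩ := H (h a) ha
  exact (hmin p ⟨hp, hpos⟩).not_gt hlt

theorem Set.infinite_setOf_pos_lt_of_forall_exists_pos_lt_mul {α : Type*} {P : α → Prop}
    {N E : α → ℝ} (hE : ∀ p, 0 < E p) (H : ∀ δ > 0, ∃ p, P p ∧ 0 < N p ∧ N p < δ * E p) :
    {p | P p ∧ 0 < N p ∧ N p < E p}.Infinite := by
  refine Set.infinite_of_forall_exists_pos_lt (h := fun p => N p / E p) fun δ hδ => ?_
  obtain ⟨p, hP, hpos, hlt⟩ := H (min δ 1) (lt_min hδ one_pos)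
  refine ⟨p, ⟨hP, hpos, hlt.trans_le ?_⟩, div_pos hpos (hE p), (div_lt_iff₀ (hE p)).2 ?_⟩
  · exact mul_le_of_le_one_left (hE p).le (min_le_right _ _)
  · exact hlt.trans_le (mul_le_mul_of_nonneg_right (min_le_left _ _) (hE p).le)

theorem Filter.Tendsto.add_prod_cofinite {α β : Type*} {f : α → ℝ} {g : β → ℝ}
    (hf : Tendsto f cofinite atTop) (hg : Tendsto g cofinite atTop) (hf0 : 0 ≤ f) (hg0 : 0 ≤ g) :
    Tendsto (fun p : α × β => f p.1 + g p.2) cofinite atTop := by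
  rw [← coprod_cofinite, Filter.coprod, tendsto_sup]
  exact ⟨tendsto_atTop_add_right_of_le _ 0 (hf.comp tendsto_comap) fun p => hg0 p.2,
    tendsto_atTop_add_left_of_le _ 0 (fun p => hf0 p.1) (hg.comp tendsto_comap)⟩

theorem Int.pi_norm_le_iSup_abs {ι : Type*} [Fintype ι] (τ : ι → ℤ) :
    ‖τ‖ ≤ ⨆ r, |(τ r : ℝ)| :=
  (pi_norm_le_iff_of_nonneg (Real.iSup_nonneg fun _ => abs_nonneg _)).2 fun r =>
    (Int.norm_eq_abs _).trans_le
      (le_ciSup (f := fun i => |(τ i : ℝ)|) (Set.finite_range _).bddAbove r)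

theorem tendsto_iSup_abs_rpow_add_natCast_rpow_cofinite {ι : Type*} [Fintype ι] {a b : ℝ}
    (ha : 0 < a) (hb : 0 < b) :
    Tendsto (fun p : (ι → ℤ) × ℕ => (⨆ r, |(p.1 r : ℝ)|) ^ a + (p.2 : ℝ) ^ b) cofinite atTop := by
  have hτ : Tendsto (fun τ : ι → ℤ => (⨆ r, |(τ r : ℝ)|) ^ a) cofinite atTop := by
    refine (tendsto_rpow_atTop ha).comp (tendsto_atTop_mono Int.pi_norm_le_iSup_abs ?_)
    rw [← cocompact_eq_cofinite]
    exact tendsto_norm_cocompact_atTop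
  have hj : Tendsto (fun j : ℕ => (j : ℝ) ^ b) cofinite atTop := by
    rw [Nat.cofinite_eq_atTop]
    exact (tendsto_rpow_atTop hb).comp tendsto_natCast_atTop_atTop
  exact hτ.add_prod_cofinite hj
    (fun τ => Real.rpow_nonneg (Real.iSup_nonneg fun _ => abs_nonneg _) _)
    (fun j => Real.rpow_nonneg j.cast_nonneg _)

theorem Set.Infinite.exists_not_one_le_mul_exp_neg {α : Type*} {s : Set α} (hs : s.Infinite)
    {W : α → ℝ} (hW : Tendsto W cofinite atTop) {ε : ℝ} (hε : 0 < ε) (C : ℝ) :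
    ∃ p ∈ s, ¬ 1 ≤ C * Real.exp (-ε * W p) := by
  have hlim : Tendsto (fun p => C * Real.exp (-ε * W p)) cofinite (𝓝 0) := by
    simpa [neg_mul] using
      ((Real.tendsto_exp_neg_atTop_nhds_zero.comp (hW.const_mul_atTop hε)).const_mul C)
  obtain ⟨p, hp, hlt⟩ := ((frequently_cofinite_iff_infinite.2 hs).and_eventually
    (hlim.eventually (gt_mem_nhds one_pos))).exists
  exact ⟨p, hp, hlt.not_ge⟩

theorem stmt4_general (m n : ℕ) (hn : 1 ≤ n) (μ : ℝ) (hμ : 1 / 2 ≤ μ)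
    (ω : Fin m → ℂ) (lam : ℕ → ℝ)
    (σ ε : ℝ)
    (H : ∀ δ : ℝ, 0 < δ → ∃ (τ : Fin m → ℤ) (j : ℕ), 1 ≤ j ∧
      0 < (⨆ r, ‖(τ r : ℂ) + ω r * lam j‖) ∧
      (⨆ r, ‖(τ r : ℂ) + ω r * lam j‖) <
        δ * Real.exp (-ε * ((⨆ r, |(τ r : ℝ)|) ^ (1 / σ) + (j : ℝ) ^ (1 / (2 * n * μ))))) :
    ∃ (u : (Fin m → ℤ) → ℕ → ℂ) (f : Fin m → (Fin m → ℤ) → ℕ → ℂ),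
      (∀ (r : Fin m) (τ : Fin m → ℤ) (j : ℕ), ((τ r : ℂ) + ω r * lam j) * u τ j = f r τ j) ∧
      (∀ (r : Fin m) (τ : Fin m → ℤ) (j : ℕ),
        ‖f r τ j‖ ≤
          Real.exp (-ε * ((⨆ r', |(τ r' : ℝ)|) ^ (1 / σ) + (j : ℝ) ^ (1 / (2 * n * μ))))) ∧
      ((∀ (τ : Fin m → ℤ) (j : ℕ), u τ j = 0 ∨ u τ j = 1) ∧
        {p : (Fin m → ℤ) × ℕ | u p.1 p.2 = 1}.Infinite) ∧
      (∀ σ' : ℝ, 1 < σ' → ∀ ε' : ℝ, 0 < ε' → ∀ C : ℝ, 0 < C →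
        ∃ (τ : Fin m → ℤ) (j : ℕ), 1 ≤ j ∧
          ¬ ‖u τ j‖ ≤
              C * Real.exp (-ε' * ((⨆ r, |(τ r : ℝ)|) ^ (1 / σ') + (j : ℝ) ^ (1 / (2 * n * μ))))) := by
  classical
  set N : (Fin m → ℤ) × ℕ → ℝ := fun p => ⨆ r, ‖(p.1 r : ℂ) + ω r * lam p.2‖
  set E : (Fin m → ℤ) × ℕ → ℝ := fun p =>
    Real.exp (-ε * ((⨆ r, |(p.1 r : ℝ)|) ^ (1 / σ) + (p.2 : ℝ) ^ (1 / (2 * n * μ))))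
  set S := {p : (Fin m → ℤ) × ℕ | 1 ≤ p.2 ∧ 0 < N p ∧ N p < E p}
  have hS : S.Infinite := Set.infinite_setOf_pos_lt_of_forall_exists_pos_lt_mul
    (fun _ => Real.exp_pos _) fun δ hδ => let ⟨τ, j, h⟩ := H δ hδ; ⟨(τ, j), h⟩
  have hq : 0 < 1 / (2 * (n : ℝ) * μ) :=
    one_div_pos.2 (mul_pos (mul_pos two_pos (Nat.cast_pos.2 hn)) (by linarith))
  refine ⟨fun τ j => if (τ, j) ∈ S then 1 else 0,
    fun r τ j => ((τ r : ℂ) + ω r * lam j) * if (τ, j) ∈ S then 1 else 0,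
    fun _ _ _ => rfl, fun r τ j => ?_,
    ⟨fun τ j => by dsimp only; split_ifs <;> simp, by simpa using hS⟩, fun σ' hσ' ε' hε' C _ => ?_⟩
  · dsimp only
    split_ifs with h
    · rw [mul_one]
      exact (le_ciSup (Set.finite_range _).bddAbove r).trans h.2.2.le
    · rw [mul_zero, norm_zero]
      exact (Real.exp_pos _).le
  · obtain ⟨p, hp, hfail⟩ := hS.exists_not_one_le_mul_exp_neg
      (tendsto_iSup_abs_rpow_add_natCast_rpow_cofinite (a := 1 / σ') (by positivity) hq) hε' C
    exact ⟨p.1, p.2, hp.1, by simpa [hp] using hfail⟩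

/-- Necessity part of the hypoellipticity criterion for time-independent systems,
in Fourier-coefficient form: failure of the Diophantine condition yields Fourier
coefficients û with values in {0,1}, infinitely many equal to 1 (hence no
Gelfand–Shilov decay), whose images f̂_r under the symbol all decay. -/
theorem stmt4 (m n : ℕ) (hm : 1 ≤ m) (hn : 1 ≤ n) (μ : ℝ) (hμ : 1 / 2 ≤ μ)
    (ω : Fin m → ℂ) (lam : ℕ → ℝ)
    (σ ε : ℝ) (hσ : 1 < σ) (hε : 0 < ε)
    (H : ∀ δ : ℝ, 0 < δ → ∃ (τ : Fin m → ℤ) (j : ℕ), 1 ≤ j ∧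
      0 < (⨆ r, ‖(τ r : ℂ) + ω r * lam j‖) ∧
      (⨆ r, ‖(τ r : ℂ) + ω r * lam j‖) <
        δ * Real.exp (-ε * ((⨆ r, |(τ r : ℝ)|) ^ (1 / σ) + (j : ℝ) ^ (1 / (2 * n * μ))))) :
    ∃ (u : (Fin m → ℤ) → ℕ → ℂ) (f : Fin m → (Fin m → ℤ) → ℕ → ℂ),
      (∀ (r : Fin m) (τ : Fin m → ℤ) (j : ℕ), ((τ r : ℂ) + ω r * lam j) * u τ j = f r τ j) ∧
      (∀ (r : Fin m) (τ : Fin m → ℤ) (j : ℕ),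
        ‖f r τ j‖ ≤
          Real.exp (-ε * ((⨆ r', |(τ r' : ℝ)|) ^ (1 / σ) + (j : ℝ) ^ (1 / (2 * n * μ))))) ∧
      ((∀ (τ : Fin m → ℤ) (j : ℕ), u τ j = 0 ∨ u τ j = 1) ∧
        {p : (Fin m → ℤ) × ℕ | u p.1 p.2 = 1}.Infinite) ∧
      (∀ σ' : ℝ, 1 < σ' → ∀ ε' : ℝ, 0 < ε' → ∀ C : ℝ, 0 < C →
        ∃ (τ : Fin m → ℤ) (j : ℕ), 1 ≤ j ∧
          ¬ ‖u τ j‖ ≤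
              C * Real.exp (-ε' * ((⨆ r, |(τ r : ℝ)|) ^ (1 / σ') + (j : ℝ) ^ (1 / (2 * n * μ))))) :=
  stmt4_general m n hn μ hμ ω lam σ ε H
end

section
/- Let σ ≥ 1, C₀ ≥ 1 and Λ ≥ 1 be real numbers, and let w : ℝ → ℂ be a smooth function such that Re w(t) ≤ 0 for all t ∈ ℝ and sup_t |w^{(ℓ)}(t)| ≤ Λ · C₀^{ℓ} · (ℓ!)^{σ} for every integer ℓ ≥ 1. Then there exists a constant C₁ > 0, depending only on C₀ and σ, such that sup_t |(d/dt)^{ℓ} e^{w(t)}| ≤ C₁^{ℓ+1} · (ℓ!)^{σ} · Λ^{ℓ} for every integer ℓ ≥ 0. -/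
open Finset

private lemma fact_part (σ : ℝ) (hσ : 1 ≤ σ) {n i : ℕ} (hi : i ≤ n) :
    (n.choose i : ℝ) * (i.factorial : ℝ) ^ σ * ((n - i + 1).factorial : ℝ) ^ σ ≤
      ((n + 1).factorial : ℝ) ^ σ := by
  set m := n - i with hm
  have key : n.choose i * i.factorial * (m + 1).factorial ≤ (n + 1).factorial := by
    have h1 : n.choose i * i.factorial * m.factorial = n.factorial :=
      Nat.choose_mul_factorial_mul_factorial hi
    have hmn : m + 1 ≤ n + 1 := by omega
    calc n.choose i * i.factorial * (m + 1).factorial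
        = (m + 1) * (n.choose i * i.factorial * m.factorial) := by
          rw [Nat.factorial_succ]; ring
      _ = (m + 1) * n.factorial := by rw [h1]
      _ ≤ (n + 1) * n.factorial := Nat.mul_le_mul_right _ hmn
      _ = (n + 1).factorial := (Nat.factorial_succ n).symm
  have hch : (1 : ℝ) ≤ (n.choose i : ℝ) := by
    exact_mod_cast Nat.one_le_iff_ne_zero.mpr (Nat.choose_pos hi).ne'
  have h2 : (n.choose i : ℝ) ≤ (n.choose i : ℝ) ^ σ := by
    calc (n.choose i : ℝ) = (n.choose i : ℝ) ^ (1 : ℝ) := (Real.rpow_one _).symm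
      _ ≤ (n.choose i : ℝ) ^ σ := Real.rpow_le_rpow_of_exponent_le hch hσ
  calc (n.choose i : ℝ) * (i.factorial : ℝ) ^ σ * ((m + 1).factorial : ℝ) ^ σ
      ≤ (n.choose i : ℝ) ^ σ * (i.factorial : ℝ) ^ σ * ((m + 1).factorial : ℝ) ^ σ := by
        gcongr <;> positivity
    _ = ((n.choose i * i.factorial * (m + 1).factorial : ℕ) : ℝ) ^ σ := by
        rw [← Real.mul_rpow (by positivity) (by positivity),
          ← Real.mul_rpow (by positivity) (by positivity)]
        push_cast; ring_nf
    _ ≤ (((n + 1).factorial : ℕ) : ℝ) ^ σ :=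
        Real.rpow_le_rpow (by positivity) (by exact_mod_cast key) (by linarith)

/-- Faà di Bruno-type Gevrey estimate: if `Re w ≤ 0` and the derivatives of `w`
satisfy Gevrey bounds `|w^{(ℓ)}| ≤ Λ C₀^ℓ (ℓ!)^σ` for `ℓ ≥ 1`, then the derivatives
of `e^w` satisfy `|(e^w)^{(ℓ)}| ≤ C₁^{ℓ+1} (ℓ!)^σ Λ^ℓ`, with `C₁` depending only
on `C₀` and `σ`. -/
theorem stmt6 (σ C₀ : ℝ) (hσ : 1 ≤ σ) (hC₀ : 1 ≤ C₀) :
    ∃ C₁ : ℝ, 0 < C₁ ∧ ∀ Λ : ℝ, 1 ≤ Λ → ∀ w : ℝ → ℂ,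
      ContDiff ℝ (⊤ : ℕ∞) w → (∀ t, (w t).re ≤ 0) →
      (∀ ℓ : ℕ, 1 ≤ ℓ → ∀ t : ℝ,
        ‖iteratedDeriv ℓ w t‖ ≤ Λ * C₀ ^ ℓ * (Nat.factorial ℓ : ℝ) ^ σ) →
      ∀ (ℓ : ℕ) (t : ℝ),
        ‖iteratedDeriv ℓ (fun s => Complex.exp (w s)) t‖ ≤
          C₁ ^ (ℓ + 1) * (Nat.factorial ℓ : ℝ) ^ σ * Λ ^ ℓ := by
  refine ⟨2 * C₀, by linarith, ?_⟩
  intro Λ hΛ w hw hre hbound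
  have hC₁ : (1 : ℝ) ≤ 2 * C₀ := by linarith
  have hwI : ContDiff ℝ (⊤ : ℕ∞) w := hw.of_le (by simp)
  have hf : ContDiff ℝ (⊤ : ℕ∞) (fun s => Complex.exp (w s)) :=
    Complex.contDiff_exp.comp hwI
  have hg : ContDiff ℝ (⊤ : ℕ∞) (deriv w) := (contDiff_infty_iff_deriv.mp hwI).2
  intro ℓ
  induction ℓ using Nat.strong_induction_on with
  | _ ℓ IH =>
  intro t
  match ℓ with
  | 0 =>
    have h1 : ‖Complex.exp (w t)‖ ≤ 1 := by
      rw [Complex.norm_exp]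
      calc Real.exp (w t).re ≤ Real.exp 0 := Real.exp_le_exp.mpr (hre t)
        _ = 1 := Real.exp_zero
    simp only [iteratedDeriv_zero, Nat.factorial_zero, Nat.cast_one, Real.one_rpow,
      pow_zero, mul_one, zero_add, pow_one]
    linarith
  | (n + 1) =>
    have hder : iteratedDeriv (n + 1) (fun s => Complex.exp (w s)) t
        = iteratedDeriv n (fun s => Complex.exp (w s) * deriv w s) t := by
      rw [iteratedDeriv_succ']
      congr 1
      funext s
      exact ((hw.differentiable (by simp) s).hasDerivAt.cexp).deriv
    rw [hder, ← norm_iteratedFDeriv_eq_norm_iteratedDeriv]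
    have hmul := norm_iteratedFDeriv_mul_le (𝕜 := ℝ)
      hf hg t (n := n) (by exact_mod_cast le_top)
    refine hmul.trans ?_
    have hterm : ∀ i ∈ range (n + 1),
        (n.choose i : ℝ) * ‖iteratedFDeriv ℝ i (fun s => Complex.exp (w s)) t‖ *
          ‖iteratedFDeriv ℝ (n - i) (deriv w) t‖ ≤
        ((n + 1).factorial : ℝ) ^ σ * Λ ^ (n + 1) * (2 * C₀) ^ (n + 2) *
          (1 / 2 : ℝ) ^ (n - i + 1) := by
      intro i hi
      have hi' : i ≤ n := by simpa using Nat.lt_succ_iff.mp (mem_range.mp hi)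
      set m := n - i with hm
      have him : i + m = n := by omega
      have h1 : ‖iteratedFDeriv ℝ i (fun s => Complex.exp (w s)) t‖ ≤
          (2 * C₀) ^ (i + 1) * (i.factorial : ℝ) ^ σ * Λ ^ i := by
        rw [norm_iteratedFDeriv_eq_norm_iteratedDeriv]
        exact IH i (Nat.lt_succ_of_le hi') t
      have h2 : ‖iteratedFDeriv ℝ (n - i) (deriv w) t‖ ≤
          Λ * C₀ ^ (m + 1) * ((m + 1).factorial : ℝ) ^ σ := by
        rw [norm_iteratedFDeriv_eq_norm_iteratedDeriv, ← hm,
          ← iteratedDeriv_succ']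
        exact hbound (m + 1) (by omega) t
      calc (n.choose i : ℝ) * ‖iteratedFDeriv ℝ i (fun s => Complex.exp (w s)) t‖ *
            ‖iteratedFDeriv ℝ (n - i) (deriv w) t‖
          ≤ (n.choose i : ℝ) * ((2 * C₀) ^ (i + 1) * (i.factorial : ℝ) ^ σ * Λ ^ i) *
            (Λ * C₀ ^ (m + 1) * ((m + 1).factorial : ℝ) ^ σ) := by
            gcongr <;> positivity
        _ = ((n.choose i : ℝ) * (i.factorial : ℝ) ^ σ * ((m + 1).factorial : ℝ) ^ σ) *
            (Λ ^ i * Λ) * ((2 * C₀) ^ (i + 1) * C₀ ^ (m + 1)) := by ring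
        _ ≤ ((n + 1).factorial : ℝ) ^ σ * Λ ^ (n + 1) *
            ((2 * C₀) ^ (n + 2) * (1 / 2 : ℝ) ^ (m + 1)) := by
            have hA := fact_part σ hσ hi'
            have hB : Λ ^ i * Λ ≤ Λ ^ (n + 1) := by
              rw [← pow_succ]
              exact pow_le_pow_right₀ hΛ (by omega)
            have hC : (2 * C₀) ^ (i + 1) * C₀ ^ (m + 1) =
                (2 * C₀) ^ (n + 2) * (1 / 2 : ℝ) ^ (m + 1) := by
              have : n + 2 = (i + 1) + (m + 1) := by omega
              rw [this, pow_add, mul_pow]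
              field_simp
              have h2m : (1/2:ℝ)^m * 2^m = 1 := by rw [← mul_pow]; norm_num
              linear_combination (-(C₀ ^ 2 * C₀ ^ i * C₀ ^ m * 2 ^ i * 2)) * h2m
            rw [← hm] at hA
            rw [hC]
            gcongr <;> positivity
        _ = ((n + 1).factorial : ℝ) ^ σ * Λ ^ (n + 1) * (2 * C₀) ^ (n + 2) *
            (1 / 2 : ℝ) ^ (m + 1) := by ring
    refine (Finset.sum_le_sum hterm).trans ?_
    rw [← Finset.mul_sum]
    have hgeom : ∑ i ∈ range (n + 1), (1 / 2 : ℝ) ^ (n - i + 1) ≤ 1 := by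
      have e1 : ∀ i ∈ range (n + 1), (1 / 2 : ℝ) ^ (n - i + 1) = (1/2) * (1/2) ^ (n - i) :=
        fun i _ => by rw [pow_succ]; ring
      rw [Finset.sum_congr rfl e1, ← Finset.mul_sum]
      have e2 : ∑ i ∈ range (n + 1), ((1:ℝ)/2) ^ (n - i) = ∑ j ∈ range (n + 1), ((1:ℝ)/2) ^ j := by
        rw [← Finset.sum_range_reflect (fun j => ((1:ℝ)/2) ^ j) (n + 1)]
        exact Finset.sum_congr rfl fun j hj => by congr 1
      rw [e2]
      have := sum_geometric_two_le (n + 1)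
      linarith
    calc ((n + 1).factorial : ℝ) ^ σ * Λ ^ (n + 1) * (2 * C₀) ^ (n + 2) *
          ∑ i ∈ range (n + 1), (1 / 2 : ℝ) ^ (n - i + 1)
        ≤ ((n + 1).factorial : ℝ) ^ σ * Λ ^ (n + 1) * (2 * C₀) ^ (n + 2) * 1 := by
          gcongr <;> positivity
      _ = (2 * C₀) ^ (n + 1 + 1) * ((n + 1).factorial : ℝ) ^ σ * Λ ^ (n + 1) := by ring
end

section
/- Let m ≥ 1 be an integer. For r = 1, …, m, let a_r, b_r : ℝ → ℝ be smooth 2π-periodic functions, set c_r := a_r + i b_r and c_{r,0} := (2π)^{−1} ∫_0^{2π} c_r(s) ds. Let λ > 0 be a real number such that λ c_{r,0} ∈ ℤ for every r. For each r, let t*_r ∈ [0, 2π] be a point where the function t ↦ ∫_0^{t} b_r(ζ) dζ attains its maximum over [0, 2π]. Define u : ℝ^m → ℂ by u(t₁, …, t_m) = Π_{r=1}^{m} exp(−λ(i ∫_0^{t_r} c_r(ζ) dζ + ∫_0^{t*_r} b_r(ζ) dζ)). Then: (1) u is 2π-periodic in each variable; (2) |u(t)| ≤ 1 for all t ∈ ℝ^m;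 (3) |u(t*₁, …, t*_m)| = 1; and (4) for each r = 1, …, m, −i ∂_{t_r} u(t) + λ c_r(t_r) u(t) = 0 for all t ∈ ℝ^m. -/
/-- Partial derivative of a function on `ℝ^m` in the `r`-th coordinate direction. -/
noncomputable def pderiv' {m : ℕ} (r : Fin m) (u : (Fin m → ℝ) → ℂ) : (Fin m → ℝ) → ℂ :=
  fun t => fderiv ℝ u t (Pi.single r 1)

/-- Building blocks of the singular homogeneous solutions: if `λ c_{r,0} ∈ ℤ` for all `r`,
the product `u(t) = Π_r exp(-λ(i∫_0^{t_r} c_r + ∫_0^{t*_r} b_r))` is 2π-periodic in each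
variable, has modulus at most 1, modulus 1 at `t*`, and solves `D_{t_r}u + λ c_r u = 0`. -/
theorem stmt8 (m : ℕ) (hm : 1 ≤ m)
    (a b : Fin m → ℝ → ℝ)
    (hsa : ∀ r, ContDiff ℝ (⊤ : ℕ∞) (a r)) (hsb : ∀ r, ContDiff ℝ (⊤ : ℕ∞) (b r))
    (hpa : ∀ r, Function.Periodic (a r) (2 * Real.pi))
    (hpb : ∀ r, Function.Periodic (b r) (2 * Real.pi))
    (c : Fin m → ℝ → ℂ) (hc : ∀ r t, c r t = (a r t : ℂ) + Complex.I * (b r t : ℂ))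
    (c0 : Fin m → ℂ)
    (hc0 : ∀ r, c0 r = (2 * Real.pi : ℂ)⁻¹ * ∫ s in (0:ℝ)..(2 * Real.pi), c r s)
    (lam : ℝ) (hlam : 0 < lam)
    (hint : ∀ r, ∃ k : ℤ, (lam : ℂ) * c0 r = (k : ℂ))
    (tstar : Fin m → ℝ)
    (htmem : ∀ r, tstar r ∈ Set.Icc (0:ℝ) (2 * Real.pi))
    (htmax : ∀ r, ∀ s ∈ Set.Icc (0:ℝ) (2 * Real.pi),
      (∫ ζ in (0:ℝ)..s, b r ζ) ≤ ∫ ζ in (0:ℝ)..(tstar r), b r ζ)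
    (u : (Fin m → ℝ) → ℂ)
    (hu : ∀ t : Fin m → ℝ, u t = ∏ r, Complex.exp (-(lam : ℂ) *
      (Complex.I * (∫ ζ in (0:ℝ)..(t r), c r ζ) +
        ((∫ ζ in (0:ℝ)..(tstar r), b r ζ : ℝ) : ℂ)))) :
    (∀ (r : Fin m) (t : Fin m → ℝ), u (Function.update t r (t r + 2 * Real.pi)) = u t) ∧
    (∀ t, ‖u t‖ ≤ 1) ∧
    ‖u tstar‖ = 1 ∧
    (∀ (r : Fin m) (t : Fin m → ℝ),
      -Complex.I * pderiv' r u t + (lam : ℂ) * c r (t r) * u t = 0) := by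
  have hca : ∀ r, Continuous (a r) := fun r => (hsa r).continuous
  have hcb : ∀ r, Continuous (b r) := fun r => (hsb r).continuous
  have hcc : ∀ r, Continuous (c r) := by
    intro r
    rw [show c r = fun t => (a r t : ℂ) + Complex.I * (b r t : ℂ) from funext (hc r)]
    exact (Complex.continuous_ofReal.comp (hca r)).add
      (continuous_const.mul (Complex.continuous_ofReal.comp (hcb r)))
  -- decomposition of ∫ c into real and imaginary parts
  have hdecomp : ∀ r (x : ℝ), (∫ ζ in (0:ℝ)..x, c r ζ) =
      ((∫ ζ in (0:ℝ)..x, a r ζ : ℝ) : ℂ) +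
        Complex.I * ((∫ ζ in (0:ℝ)..x, b r ζ : ℝ) : ℂ) := by
    intro r x
    have hA : IntervalIntegrable (fun ζ : ℝ => ((a r ζ : ℝ) : ℂ)) MeasureTheory.volume 0 x :=
      Continuous.intervalIntegrable (by fun_prop) 0 x
    have hB : IntervalIntegrable (fun ζ : ℝ => Complex.I * ((b r ζ : ℝ) : ℂ))
        MeasureTheory.volume 0 x := Continuous.intervalIntegrable (by fun_prop) 0 x
    rw [intervalIntegral.integral_congr (g := fun ζ =>
        (a r ζ : ℂ) + Complex.I * (b r ζ : ℂ)) (fun ζ _ => hc r ζ),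
      intervalIntegral.integral_add hA hB,
      intervalIntegral.integral_const_mul, intervalIntegral.integral_ofReal,
      intervalIntegral.integral_ofReal]
  have hlam0 : (lam : ℝ) ≠ 0 := ne_of_gt hlam
  have hpi : (0:ℝ) < 2 * Real.pi := by positivity
  have hpiC : (2 * Real.pi : ℂ) ≠ 0 := by
    simp [Real.pi_ne_zero]
  -- ∫_0^{2π} c = 2π c0
  have hint2 : ∀ r, (∫ s in (0:ℝ)..(2 * Real.pi), c r s) = (2 * Real.pi : ℂ) * c0 r := by
    intro r
    rw [hc0 r, ← mul_assoc, mul_inv_cancel₀ hpiC, one_mul]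
  -- ∫_0^{2π} b = 0
  have hb0 : ∀ r, (∫ ζ in (0:ℝ)..(2 * Real.pi), b r ζ) = 0 := by
    intro r
    obtain ⟨k, hk⟩ := hint r
    have h1 : (lam : ℂ) * (∫ s in (0:ℝ)..(2 * Real.pi), c r s)
        = (2 * Real.pi : ℂ) * (k : ℂ) := by
      rw [hint2 r, ← mul_assoc, mul_comm (lam:ℂ), mul_assoc, hk]
    rw [hdecomp r] at h1
    have h2 : lam * (∫ ζ in (0:ℝ)..(2 * Real.pi), b r ζ) = 0 := by
      have h3 := congrArg Complex.im h1
      simpa [Complex.mul_im, Complex.add_im, Complex.I_im, Complex.I_re] using h3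
    exact (mul_eq_zero.mp h2).resolve_left hlam0
  -- the primitive of b is periodic
  have hBper : ∀ r, Function.Periodic (fun x => ∫ ζ in (0:ℝ)..x, b r ζ) (2 * Real.pi) := by
    intro r x
    have hadj : (∫ ζ in (0:ℝ)..x, b r ζ) + (∫ ζ in x..(x + 2 * Real.pi), b r ζ)
        = ∫ ζ in (0:ℝ)..(x + 2 * Real.pi), b r ζ :=
      intervalIntegral.integral_add_adjacent_intervals
        ((hcb r).intervalIntegrable _ _) ((hcb r).intervalIntegrable _ _)
    have hper : (∫ ζ in x..(x + 2 * Real.pi), b r ζ)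
        = ∫ ζ in (0:ℝ)..(0 + 2 * Real.pi), b r ζ := (hpb r).intervalIntegral_add_eq x 0
    simp only [zero_add] at hper
    simp only [← hadj, hper, hb0 r, add_zero]
  -- the primitive of b is globally maximized at tstar
  have hBle : ∀ r (x : ℝ), (∫ ζ in (0:ℝ)..x, b r ζ) ≤ ∫ ζ in (0:ℝ)..(tstar r), b r ζ := by
    intro r x
    obtain ⟨y, hy, hxy⟩ := (hBper r).exists_mem_Ico₀ hpi x
    rw [hxy]
    exact htmax r y (Set.Ico_subset_Icc_self hy)
  -- real part of the exponent
  have hre : ∀ r (x : ℝ), (-(lam : ℂ) * (Complex.I * (∫ ζ in (0:ℝ)..x, c r ζ) +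
      ((∫ ζ in (0:ℝ)..(tstar r), b r ζ : ℝ) : ℂ))).re
      = -(lam * ((∫ ζ in (0:ℝ)..(tstar r), b r ζ) - ∫ ζ in (0:ℝ)..x, b r ζ)) := by
    intro r x
    rw [hdecomp r x]
    simp only [Complex.mul_re, Complex.add_re, Complex.add_im, Complex.mul_im,
      Complex.I_re, Complex.I_im, Complex.ofReal_re, Complex.ofReal_im,
      Complex.neg_re, Complex.neg_im]
    ring
  -- modulus formula
  have habs : ∀ t : Fin m → ℝ, ‖u t‖
      = ∏ r, Real.exp (-(lam * ((∫ ζ in (0:ℝ)..(tstar r), b r ζ)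
          - ∫ ζ in (0:ℝ)..(t r), b r ζ))) := by
    intro t
    rw [hu t, norm_prod]
    exact Finset.prod_congr rfl fun r _ => by rw [Complex.norm_exp, hre]
  refine ⟨?_, ?_, ?_, ?_⟩
  · -- periodicity
    intro r t
    rw [hu, hu]
    refine Finset.prod_congr rfl fun s _ => ?_
    rcases eq_or_ne s r with h | h
    · subst h
      rw [Function.update_self]
      obtain ⟨k, hk⟩ := hint s
      have hcper : Function.Periodic (c s) (2 * Real.pi) := by
        intro x
        rw [hc s, hc s, hpa s x, hpb s x]
      have hadj : (∫ ζ in (0:ℝ)..(t s), c s ζ) + (∫ ζ in (t s)..(t s + 2 * Real.pi), c s ζ)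
          = ∫ ζ in (0:ℝ)..(t s + 2 * Real.pi), c s ζ :=
        intervalIntegral.integral_add_adjacent_intervals
          ((hcc s).intervalIntegrable _ _) ((hcc s).intervalIntegrable _ _)
      have hper : (∫ ζ in (t s)..(t s + 2 * Real.pi), c s ζ)
          = ∫ ζ in (0:ℝ)..(0 + 2 * Real.pi), c s ζ := hcper.intervalIntegral_add_eq (t s) 0
      simp only [zero_add] at hper
      have hsplit : (∫ ζ in (0:ℝ)..(t s + 2 * Real.pi), c s ζ)
          = (∫ ζ in (0:ℝ)..(t s), c s ζ) + (2 * Real.pi : ℂ) * c0 s := by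
        rw [← hadj, hper, hint2 s]
      rw [hsplit, show -(lam : ℂ) * (Complex.I * ((∫ ζ in (0:ℝ)..(t s), c s ζ)
            + (2 * Real.pi : ℂ) * c0 s) + ((∫ ζ in (0:ℝ)..(tstar s), b s ζ : ℝ) : ℂ))
          = -(lam : ℂ) * (Complex.I * (∫ ζ in (0:ℝ)..(t s), c s ζ)
            + ((∫ ζ in (0:ℝ)..(tstar s), b s ζ : ℝ) : ℂ))
            + ((-k : ℤ) : ℂ) * (2 * Real.pi * Complex.I) from by
          push_cast
          linear_combination (-2 * (Real.pi : ℂ) * Complex.I) * hk,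
        Complex.exp_add, Complex.exp_int_mul_two_pi_mul_I, mul_one]
    · rw [Function.update_of_ne h]
  · -- modulus at most 1
    intro t
    rw [habs t]
    refine Finset.prod_le_one (fun r _ => (Real.exp_pos _).le) fun r _ => ?_
    rw [Real.exp_le_one_iff, neg_nonpos]
    have := hBle r (t r)
    nlinarith
  · -- modulus 1 at tstar
    rw [habs tstar]
    simp
  · -- the equation
    intro r t
    classical
    set g : Fin m → ℝ → ℂ := fun s x => Complex.exp (-(lam : ℂ) *
      (Complex.I * (∫ ζ in (0:ℝ)..x, c s ζ) +
        ((∫ ζ in (0:ℝ)..(tstar s), b s ζ : ℝ) : ℂ))) with hg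
    have hder : ∀ s : Fin m, HasDerivAt (g s)
        (g s (t s) * (-(lam : ℂ) * (Complex.I * c s (t s)))) (t s) := by
      intro s
      have h1 : HasDerivAt (fun x => ∫ ζ in (0:ℝ)..x, c s ζ) (c s (t s)) (t s) :=
        intervalIntegral.integral_hasDerivAt_right ((hcc s).intervalIntegrable _ _)
          ((hcc s).stronglyMeasurableAtFilter _ _) (hcc s).continuousAt
      have h2 : HasDerivAt (fun x => -(lam : ℂ) * (Complex.I * (∫ ζ in (0:ℝ)..x, c s ζ) +
          ((∫ ζ in (0:ℝ)..(tstar s), b s ζ : ℝ) : ℂ)))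
          (-(lam : ℂ) * (Complex.I * c s (t s))) (t s) :=
        (((h1.const_mul Complex.I).add_const _).const_mul (-(lam : ℂ)))
      exact h2.cexp
    set d : Fin m → ℂ := fun s => g s (t s) * (-(lam : ℂ) * (Complex.I * c s (t s))) with hd
    set F' : Fin m → (Fin m → ℝ) →L[ℝ] ℂ := fun s =>
      ((ContinuousLinearMap.smulRight (1 : ℝ →L[ℝ] ℝ) (d s)).comp
        (ContinuousLinearMap.proj s : (Fin m → ℝ) →L[ℝ] ℝ)) with hF'
    have hF : ∀ s : Fin m, HasFDerivAt (fun t : Fin m → ℝ => g s (t s)) (F' s) t := by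
      intro s
      exact (hder s).hasFDerivAt.comp t
        ((ContinuousLinearMap.proj s : (Fin m → ℝ) →L[ℝ] ℝ)).hasFDerivAt
    have hprod : HasFDerivAt (fun t : Fin m → ℝ => ∏ s, g s (t s))
        (∑ s, (∏ j ∈ Finset.univ.erase s, g j (t j)) • F' s) t :=
      HasFDerivAt.finset_prod (fun s _ => hF s)
    have huu : u = fun t : Fin m → ℝ => ∏ s, g s (t s) := funext hu
    rw [huu] at *
    have hpd : pderiv' r (fun t : Fin m → ℝ => ∏ s, g s (t s)) t
        = (∏ j ∈ Finset.univ.erase r, g j (t j)) *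
          (g r (t r) * (-(lam : ℂ) * (Complex.I * c r (t r)))) := by
      unfold pderiv'
      rw [hprod.fderiv]
      simp only [ContinuousLinearMap.coe_sum', Finset.sum_apply,
        ContinuousLinearMap.coe_smul', Pi.smul_apply, hF', ContinuousLinearMap.coe_comp',
        Function.comp_apply, ContinuousLinearMap.proj_apply,
        ContinuousLinearMap.smulRight_apply, ContinuousLinearMap.one_apply]
      rw [Finset.sum_eq_single r]
      · simp only [Pi.single_eq_same, one_smul, smul_eq_mul, hd]
      · intro s _ hs
        simp [Pi.single_eq_of_ne hs]
      · simp
    rw [hpd, show (fun t : Fin m → ℝ => ∏ s, g s (t s)) t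
        = g r (t r) * ∏ j ∈ Finset.univ.erase r, g j (t j) from
      (Finset.mul_prod_erase Finset.univ (fun s => g s (t s)) (Finset.mem_univ r)).symm]
    ring_nf
    rw [Complex.I_sq]
    ring
end
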